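/- arXiv:2510.23178 — 3 statements merged into one kernel-verified Lean document; each statement's English description precedes it below -/
import Mathlib

section
/- Let 0 ≤ a ≤ b ≤ 1, and let the opponent's total bid X have an atom of mass b − a at b and be uniform on (b, a+1] otherwise. Then a player with sunk first-stage bid b who chooses any total bid t ∈ (b, a+1] obtains expected continuation payoff P(X < t) − (t − b) = b − a, independent of t (indifference across the interval). -/
open MeasureTheory Set

/-- Against the atom-plus-uniform opponent distribution X (atom of mass b − a at b,
uniform on (b, a+1] otherwise, 0 ≤ a ≤ b ≤ 1), a player with sunk first-stage bid b
choosing any total bid t ∈ (b, a+1] obtains continuation payoff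
P(X < t) − (t − b) = b − a, independent of t. -/
theorem indifference_on_interval (a b : ℝ) (h0 : 0 ≤ a) (hab : a ≤ b) (hb : b ≤ 1) :
    let X : Measure ℝ :=
      ENNReal.ofReal (b - a) • Measure.dirac b + volume.restrict (Ioc b (a + 1))
    ∀ t ∈ Ioc b (a + 1), (X (Iio t)).toReal - (t - b) = b - a := by
  intro X t ht
  obtain ⟨ht1, ht2⟩ := ht
  have hX : X (Iio t) = ENNReal.ofReal (b - a) + ENNReal.ofReal (t - b) := by
    show (ENNReal.ofReal (b - a) • Measure.dirac b + volume.restrict (Ioc b (a + 1))) (Iio t)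
        = _
    rw [Measure.add_apply, Measure.smul_apply, Measure.dirac_apply' _ measurableSet_Iio,
      Measure.restrict_apply measurableSet_Iio]
    have h1 : Iio t ∩ Ioc b (a + 1) = Ioo b t := by
      ext x
      simp only [mem_inter_iff, mem_Iio, mem_Ioc, mem_Ioo]
      constructor
      · rintro ⟨h, h', _⟩; exact ⟨h', h⟩
      · rintro ⟨h, h'⟩; exact ⟨h', h, le_trans h'.le ht2⟩
    rw [h1, Real.volume_Ioo, indicator_of_mem (mem_Iio.mpr ht1)]
    simp [smul_eq_mul]
  rw [hX, ENNReal.toReal_add (by simp) (by simp), ENNReal.toReal_ofReal (by linarith),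
    ENNReal.toReal_ofReal (by linarith)]
  ring
end

section
/- Let 0 ≤ a ≤ b ≤ 1 with opponent's total bid X having an atom of mass b − a at b and uniform on (b, a+1] otherwise. Then a player with sunk bid a who stays at total bid a (second-stage bid 0) obtains payoff P(X < a) = 0, which equals the payoff b − a − (b − a) from any total bid in (b, a+1] net of the additional cost; hence bidding 0 in stage 2 is a best response for the low first-stage bidder, giving continuation payoff 0. -/
open MeasureTheory Set

/-- Against the atom-plus-uniform opponent distribution X (atom of mass b − a at b,
uniform on (b, a+1] otherwise, 0 ≤ a ≤ b ≤ 1), the low first-stage bidder with sunk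
bid a who stays at total bid a gets payoff P(X < a) = 0, which equals the payoff from
any total bid in (b, a+1] net of the additional cost; so bidding 0 in stage 2 is a best
response, giving continuation payoff 0. -/
theorem low_bidder_zero_best_response (a b : ℝ) (h0 : 0 ≤ a) (hab : a ≤ b) (hb : b ≤ 1) :
    let X : Measure ℝ :=
      ENNReal.ofReal (b - a) • Measure.dirac b + volume.restrict (Ioc b (a + 1))
    (X (Iio a)).toReal = 0 ∧
    ∀ t ∈ Ioc b (a + 1), (X (Iio t)).toReal - (t - a) = 0 := by
  intro X
  constructor
  · have h1 : X (Iio a) = 0 := by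
      simp only [X, Measure.add_apply, Measure.smul_apply, smul_eq_mul,
        Measure.dirac_apply' _ measurableSet_Iio,
        Measure.restrict_apply measurableSet_Iio]
      have hb' : b ∉ Iio a := by simp [not_lt.2 hab]
      have : Iio a ∩ Ioc b (a + 1) = ∅ := by
        ext x; simp only [mem_inter_iff, mem_Iio, mem_Ioc, mem_empty_iff_false, iff_false]
        rintro ⟨hx, hx2, _⟩; linarith
      simp [hb', this]
    simp [h1]
  · intro t ht
    obtain ⟨ht1, ht2⟩ := ht
    have h2 : Iio t ∩ Ioc b (a + 1) = Ioo b t := by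
      ext x; simp only [mem_inter_iff, mem_Iio, mem_Ioc, mem_Ioo]
      constructor
      · rintro ⟨hx, hx2, _⟩; exact ⟨hx2, hx⟩
      · rintro ⟨hx, hx2⟩; exact ⟨hx2, hx, by linarith⟩
    have hbt : b ∈ Iio t := ht1
    have : X (Iio t) = ENNReal.ofReal (b - a) + ENNReal.ofReal (t - b) := by
      simp only [X, Measure.add_apply, Measure.smul_apply, smul_eq_mul,
        Measure.dirac_apply' _ measurableSet_Iio,
        Measure.restrict_apply measurableSet_Iio, h2, Real.volume_Ioo]
      simp [hbt]
    rw [this, ← ENNReal.ofReal_add (by linarith) (by linarith),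
      ENNReal.toReal_ofReal (by linarith)]
    ring
end

section
/- Let 0 ≤ a ≤ b ≤ 1. If the high bidder (sunk bid b) stays at total bid b with probability b − a and otherwise picks a total uniform on (b, a+1], and the low bidder behaves symmetrically (stays at a with probability b − a, else uniform on (b, a+1]), then the high bidder's expected continuation payoff (win probability minus expected second-stage payment) is b − a. -/
open MeasureTheory Set
open scoped ENNReal

/-!
Conditioning on the high bidder's total `x`, he wins with probability `F(x)`, the low bidder's
distribution function. With `c = b - a` and `L = a + 1 - b` this gives a win probability of
`c² + ∫_b^{a+1} (c + x - b) dx = c² + cL + L²/2`, while the expected total bid is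
`cb + ((a+1)² - b²)/2`. Since `c + L = 1`, the difference collapses to `c`.
-/

noncomputable def atomPlusUniform (w x lo hi : ℝ) : Measure ℝ :=
  ENNReal.ofReal w • Measure.dirac x + volume.restrict (Ioc lo hi)

instance (w x lo hi : ℝ) : SFinite (atomPlusUniform w x lo hi) := by
  unfold atomPlusUniform; infer_instance

section atomPlusUniform

variable {w x lo hi : ℝ}

theorem atomPlusUniform_Iic {t : ℝ} (hx : x ≤ t) (ht : t ≤ hi) :
    atomPlusUniform w x lo hi (Iic t) = ENNReal.ofReal w + ENNReal.ofReal (t - lo) := by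
  simp [atomPlusUniform, Measure.dirac_apply' _ measurableSet_Iic, hx,
    Measure.restrict_apply measurableSet_Iic, Iic_inter_Ioc_of_le ht]

theorem lintegral_atomPlusUniform (f : ℝ → ℝ≥0∞) :
    ∫⁻ t, f t ∂atomPlusUniform w x lo hi = ENNReal.ofReal w * f x + ∫⁻ t in Ioc lo hi, f t := by
  rw [atomPlusUniform, lintegral_add_measure, lintegral_smul_measure, lintegral_dirac, smul_eq_mul]

theorem integral_id_atomPlusUniform (hw : 0 ≤ w) (h : lo ≤ hi) :
    ∫ t, t ∂atomPlusUniform w x lo hi = w * x + (hi ^ 2 - lo ^ 2) / 2 := by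
  have hdirac : Integrable (fun t : ℝ => t) (ENNReal.ofReal w • Measure.dirac x) :=
    ((integrable_const x).congr (ae_eq_dirac (fun t : ℝ => t)).symm).smul_measure
      ENNReal.ofReal_ne_top
  have hunif : Integrable (fun t : ℝ => t) (volume.restrict (Ioc lo hi)) :=
    continuous_id.integrableOn_Ioc
  rw [atomPlusUniform, integral_add_measure hdirac hunif,
    integral_smul_measure, integral_dirac, ENNReal.toReal_ofReal hw, smul_eq_mul,
    ← intervalIntegral.integral_of_le h, integral_id]

end atomPlusUniform

theorem prod_setOf_ge_eq_lintegral_Iic (μ ν : Measure ℝ) [SFinite ν] :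
    (μ.prod ν) {p : ℝ × ℝ | p.1 ≥ p.2} = ∫⁻ x, ν (Iic x) ∂μ :=
  Measure.prod_apply (measurableSet_le measurable_snd measurable_fst)

theorem setLIntegral_Ioc_ofReal_add_sub {w lo hi : ℝ} (hw : 0 ≤ w) (h : lo ≤ hi) :
    ∫⁻ t in Ioc lo hi, ENNReal.ofReal (w + (t - lo)) =
      ENNReal.ofReal (w * (hi - lo) + (hi - lo) ^ 2 / 2) := by
  have hnonneg : 0 ≤ᵐ[volume.restrict (Ioc lo hi)] fun t => w + (t - lo) :=
    (ae_restrict_iff' measurableSet_Ioc).2 <| ae_of_all _ fun t ht => by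
      simp only [Pi.zero_apply]; linarith [ht.1]
  rw [← ofReal_integral_eq_lintegral_ofReal (by fun_prop : Continuous fun t => w + (t - lo)
    ).integrableOn_Ioc hnonneg, ← intervalIntegral.integral_of_le h]
  congr 1
  simp only [intervalIntegral.integral_add intervalIntegrable_const
      (intervalIntegral.intervalIntegrable_id.sub intervalIntegrable_const),
    intervalIntegral.integral_sub intervalIntegral.intervalIntegrable_id intervalIntegrable_const,
    intervalIntegral.integral_const, integral_id, smul_eq_mul]
  ring

theorem atomPlusUniform_prod_setOf_ge {w w' x' lo hi : ℝ} (hw : 0 ≤ w) (hw' : 0 ≤ w')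
    (hx' : x' ≤ lo) (h : lo ≤ hi) :
    ((atomPlusUniform w lo lo hi).prod (atomPlusUniform w' x' lo hi)) {p | p.1 ≥ p.2} =
      ENNReal.ofReal (w * w' + (w' * (hi - lo) + (hi - lo) ^ 2 / 2)) := by
  have hcdf : ∀ t ∈ Ioc lo hi,
      atomPlusUniform w' x' lo hi (Iic t) = ENNReal.ofReal (w' + (t - lo)) := fun t ht => by
    rw [atomPlusUniform_Iic (hx'.trans ht.1.le) ht.2, ENNReal.ofReal_add hw' (by linarith [ht.1])]
  rw [prod_setOf_ge_eq_lintegral_Iic, lintegral_atomPlusUniform,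
    atomPlusUniform_Iic hx' h, sub_self, ENNReal.ofReal_zero, add_zero,
    setLIntegral_congr_fun measurableSet_Ioc hcdf, setLIntegral_Ioc_ofReal_add_sub hw' h,
    ← ENNReal.ofReal_mul hw, ← ENNReal.ofReal_add (by positivity) (by nlinarith)]

/-- If the high bidder (sunk bid b) stays at total b with probability b − a and otherwise
is uniform on (b, a+1], and the low bidder stays at a with probability b − a and otherwise
is uniform on (b, a+1] (independently), with the high bidder winning ties, then the high
bidder's expected continuation payoff (win probability minus expected second-stage
payment) is b − a. -/
theorem high_bidder_continuation_payoff (a b : ℝ) (h0 : 0 ≤ a) (hab : a ≤ b) (hb : b ≤ 1) :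
    let μH : Measure ℝ :=
      ENNReal.ofReal (b - a) • Measure.dirac b + volume.restrict (Ioc b (a + 1))
    let μL : Measure ℝ :=
      ENNReal.ofReal (b - a) • Measure.dirac a + volume.restrict (Ioc b (a + 1))
    ((μH.prod μL) {p : ℝ × ℝ | p.1 ≥ p.2}).toReal - ((∫ x, x ∂μH) - b) = b - a := by
  intro μH μL
  have hc : 0 ≤ b - a := sub_nonneg.2 hab
  have hL : b ≤ a + 1 := by linarith
  change ((atomPlusUniform (b - a) b b (a + 1)).prod (atomPlusUniform (b - a) a b (a + 1))
      {p | p.1 ≥ p.2}).toReal - ((∫ x, x ∂atomPlusUniform (b - a) b b (a + 1)) - b) = b - a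
  rw [atomPlusUniform_prod_setOf_ge hc hc hab hL, integral_id_atomPlusUniform hc hL,
    ENNReal.toReal_ofReal (by nlinarith)]
  ring
end
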